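/- Let ψ be an abelian map on a group G. For all m, n ≥ 0, the triple (G, ∘_m, ∘_n) is a skew left brace; that is, the brace relation g ∘_n (h ∘_m k) = (g ∘_n h) ∘_m g̃ ∘_m (g ∘_n k) holds for all g, h, k ∈ G, where g̃ = ψ_m(g)·g⁻¹·ψ_m(g⁻¹) is the inverse of g in the group (G, ∘_m). -/

import Mathlib

/-- `aDelta ψ g = g · ψ(g⁻¹)`, the map `δ = 1 - ψ`. -/
def aDelta {G : Type*} [Group G] (ψ : G → G) (g : G) : G := g * ψ g⁻¹

/-- `aPsi ψ n g = (δⁿ(g))⁻¹ · g`, the map `ψ_n = -(1-ψ)ⁿ + 1` (so `ψ_0 = 0`, `ψ_1 = ψ`). -/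
def aPsi {G : Type*} [Group G] (ψ : G → G) (n : ℕ) (g : G) : G :=
  ((aDelta ψ)^[n] g)⁻¹ * g

/-- `g ∘_n h = g · ψ_n(g⁻¹) · h · ψ_n(g)`. -/
def aCirc {G : Type*} [Group G] (ψ : G → G) (n : ℕ) (g h : G) : G :=
  g * aPsi ψ n g⁻¹ * h * aPsi ψ n g

/-!
Since `ψ` is an endomorphism with abelian image, induction on
`ψ_{n+1}(g) = ψ(g · ψ_n(g)⁻¹) · ψ_n(g)` shows that every `ψ_n` is again an endomorphism with
values in `ψ(G)`. So it suffices to prove the brace relation for `g ∘_φ h = g φ(g)⁻¹ h φ(g)` with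
any endomorphisms `φ, χ` such that `χ(G)` is abelian and commutes with `φ(G)`. Writing
`a = φ g`, `b = χ h`, `c = χ g`, one has `χ(g ∘_φ h) = c b`; hence the `∘_χ`-product of
`g ∘_φ h` with the `∘_χ`-inverse `c g⁻¹ c⁻¹` of `g` equals `g a⁻¹ h a b⁻¹ g⁻¹ b` and has
`χ`-image `b`. The right-hand side then collapses to `g a⁻¹ h a b⁻¹ a⁻¹ k a b`, which is the
left-hand side `g a⁻¹ h b⁻¹ k b a` because `a` and `b` commute.
-/

section TwistedMul

variable {G : Type*} [Group G]

def twistedMul (φ : G →* G) (g h : G) : G := g * (φ g)⁻¹ * h * φ g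

theorem map_twistedMul {φ χ : G →* G} {g h : G} (hc : Commute (χ (φ g)) (χ h)) :
    χ (twistedMul φ g h) = χ g * χ h := by
  rw [twistedMul, map_mul, map_mul, map_mul, map_inv, mul_assoc (χ g), mul_assoc (χ g),
    hc.inv_mul_cancel]

theorem twistedMul_brace (φ χ : G →* G) (hχ : ∀ x y, Commute (χ x) (χ y))
    (hφχ : ∀ x y, Commute (φ x) (χ y)) (g h k : G) :
    twistedMul φ g (twistedMul χ h k) =
      twistedMul χ (twistedMul χ (twistedMul φ g h) (χ g * g⁻¹ * (χ g)⁻¹))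
        (twistedMul φ g k) := by
  have hA : χ (twistedMul φ g h) = χ g * χ h := map_twistedMul (hχ _ _)
  have hB : χ (twistedMul χ (twistedMul φ g h) (χ g * g⁻¹ * (χ g)⁻¹)) = χ h := by
    rw [map_twistedMul (hχ _ _), hA, map_mul, map_mul, map_inv, map_inv,
      (hχ _ _).inv_right.mul_inv_cancel, (hχ g h).mul_inv_cancel]
  have hab : Commute (φ g) (χ h) := hφχ g h
  calc twistedMul φ g (twistedMul χ h k)
      = g * (φ g)⁻¹ * h * (χ h)⁻¹ * k * (χ h * φ g) := by simp only [twistedMul]; group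
    _ = g * (φ g)⁻¹ * h * (φ g * (χ h)⁻¹ * (φ g)⁻¹) * k * (φ g * χ h) := by
        rw [hab.inv_right.mul_inv_cancel, hab.eq]
    _ = _ := by
        rw [twistedMul, hB, twistedMul, hA]
        simp only [twistedMul]
        group

end TwistedMul

section AbelianMap

variable {G : Type*} [Group G] (f : G →* G)

theorem aPsi_zero (g : G) : aPsi f 0 g = 1 := by
  simp [aPsi]

theorem aPsi_succ (n : ℕ) (g : G) :
    aPsi f (n + 1) g = f (g * (aPsi f n g)⁻¹) * aPsi f n g := by
  simp only [aPsi, Function.iterate_succ_apply', aDelta, map_inv, mul_inv_rev, inv_inv,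
    mul_inv_cancel_left, mul_assoc]

theorem aPsi_mem_range (n : ℕ) (g : G) : aPsi f n g ∈ f.range := by
  induction n with
  | zero => simp [aPsi_zero]
  | succ n ih => rw [aPsi_succ]; exact mul_mem ⟨_, rfl⟩ ih

variable {f}

theorem commute_of_mem_range (hf : ∀ x y, Commute (f x) (f y)) {x y : G} (hx : x ∈ f.range)
    (hy : y ∈ f.range) : Commute x y := by
  obtain ⟨a, rfl⟩ := hx
  obtain ⟨b, rfl⟩ := hy
  exact hf a b

theorem commute_aPsi (hf : ∀ x y, Commute (f x) (f y)) (m n : ℕ) (x y : G) :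
    Commute (aPsi f m x) (aPsi f n y) :=
  commute_of_mem_range hf (aPsi_mem_range f m x) (aPsi_mem_range f n y)

theorem aPsi_mul (hf : ∀ x y, Commute (f x) (f y)) (n : ℕ) (a b : G) :
    aPsi f n (a * b) = aPsi f n a * aPsi f n b := by
  induction n with
  | zero => simp [aPsi_zero]
  | succ n ih =>
    set u := f (b * (aPsi f n b)⁻¹)
    have hδ : f (a * b * (aPsi f n a * aPsi f n b)⁻¹) = f (a * (aPsi f n a)⁻¹) * u := by
      calc f (a * b * (aPsi f n a * aPsi f n b)⁻¹)
          = f a * (u * (f (aPsi f n a))⁻¹) := by simp only [u, map_mul, map_inv]; group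
        _ = f a * ((f (aPsi f n a))⁻¹ * u) := by rw [(hf _ _).inv_right.eq]
        _ = f (a * (aPsi f n a)⁻¹) * u := by simp only [map_mul, map_inv]; group
    have hu : Commute u (aPsi f n a) := commute_of_mem_range hf ⟨_, rfl⟩ (aPsi_mem_range f n a)
    rw [aPsi_succ, aPsi_succ, aPsi_succ, ih, hδ, mul_assoc, ← mul_assoc u, hu.eq]
    simp only [u, mul_assoc]

def aPsiHom (hf : ∀ x y, Commute (f x) (f y)) (n : ℕ) : G →* G :=
  MonoidHom.mk' (aPsi f n) (aPsi_mul hf n)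

theorem aPsi_inv (hf : ∀ x y, Commute (f x) (f y)) (n : ℕ) (g : G) :
    aPsi f n g⁻¹ = (aPsi f n g)⁻¹ :=
  map_inv (aPsiHom hf n) g

theorem aCirc_eq_twistedMul (hf : ∀ x y, Commute (f x) (f y)) (n : ℕ) (g h : G) :
    aCirc f n g h = twistedMul (aPsiHom hf n) g h := by
  rw [aCirc, aPsi_inv hf]
  rfl

end AbelianMap

/-- `(G, ∘_m, ∘_n)` is a skew left brace: the brace relation
`g ∘_n (h ∘_m k) = (g ∘_n h) ∘_m g̃ ∘_m (g ∘_n k)` holds, where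
`g̃ = ψ_m(g)·g⁻¹·ψ_m(g⁻¹)` is the `∘_m`-inverse of `g`. -/
theorem stmt9 {G : Type*} [Group G] (ψ : G → G)
    (hψ : ∀ a b : G, ψ (a * b) = ψ a * ψ b)
    (hab : ∀ a b : G, ψ a * ψ b = ψ b * ψ a)
    (m n : ℕ) (g h k : G) :
    aCirc ψ n g (aCirc ψ m h k) =
      aCirc ψ m (aCirc ψ m (aCirc ψ n g h) (aPsi ψ m g * g⁻¹ * aPsi ψ m g⁻¹))
        (aCirc ψ n g k) := by
  obtain ⟨f, rfl⟩ : ∃ f : G →* G, ⇑f = ψ := ⟨MonoidHom.mk' ψ hψ, rfl⟩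
  rw [aPsi_inv hab]
  simp only [aCirc_eq_twistedMul hab]
  exact twistedMul_brace (aPsiHom hab n) (aPsiHom hab m) (commute_aPsi hab m m)
    (commute_aPsi hab n m) g h k
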